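/- Let R be a commutative ring, r a natural number, and f, g ∈ R[ℤ^r] Laurent polynomials. Suppose that for every λ ∈ supp(f) whose image in ℝ^r is an extreme point of the Newton polytope N(f), the coefficient of f at λ is not a zero divisor in R. Then N(f·g) = N(f) + N(g), where + denotes the Minkowski sum of subsets of ℝ^r. -/

import Mathlib

open Pointwise

/-- The canonical embedding `ℤ^r → ℝ^r`. -/
noncomputable def latticeEmbed {r : ℕ} (l : Fin r → ℤ) : Fin r → ℝ :=
  fun i => (l i : ℝ)

/-- The Newton polytope of a Laurent polynomial `f ∈ R[ℤ^r]`: the convex hull in `ℝ^r`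
of the (images of the) exponents with nonzero coefficient. -/
noncomputable def newtonPolytope {R : Type*} [CommRing R] {r : ℕ}
    (f : AddMonoidAlgebra R (Fin r → ℤ)) : Set (Fin r → ℝ) :=
  convexHull ℝ (latticeEmbed '' (f.coeff.support : Set (Fin r → ℤ)))

/-!
The inclusion `N(f g) ⊆ N(f) + N(g)` holds because `supp (f g) ⊆ supp f + supp g`. For the
converse, by Krein–Milman it suffices that every extreme point `p` of the polytope `N(f) + N(g)`
lies in `N(f g)`. Such a `p` is `λ + μ` with `λ ∈ supp f` and `μ ∈ supp g`; as `p` is extreme,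
this is its only decomposition as a sum of a point of `N(f)` and a point of `N(g)`, and `λ` is an
extreme point of `N(f)`. Hence the coefficient of `f g` at `λ + μ` is the single product
`f_λ g_μ`, which is nonzero because `f_λ` is a non-zero-divisor and `g_μ ≠ 0`.
-/

open Set

section ExtremePointsAdd

variable {𝕜 E : Type*} [AddCommGroup E] {s t : Set E} {a b : E}

theorem mem_extremePoints_of_add_mem_extremePoints_add [Ring 𝕜] [PartialOrder 𝕜]
    [IsOrderedRing 𝕜] [Module 𝕜 E] (hab : a + b ∈ (s + t).extremePoints 𝕜) (ha : a ∈ s)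
    (hb : b ∈ t) : a ∈ s.extremePoints 𝕜 := by
  refine ⟨ha, fun x hx y hy hxy ↦ ?_⟩
  have hmem : a + b ∈ openSegment 𝕜 (x + b) (y + b) := by
    simpa only [add_comm b] using (mem_openSegment_translate 𝕜 b).2 hxy
  exact add_right_cancel (hab.2 (add_mem_add hx hb) (add_mem_add hy hb) hmem)

theorem eq_and_eq_of_add_eq_of_add_mem_extremePoints_add [Field 𝕜] [LinearOrder 𝕜]
    [IsStrictOrderedRing 𝕜] [Module 𝕜 E] (hab : a + b ∈ (s + t).extremePoints 𝕜) (ha : a ∈ s)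
    (hb : b ∈ t) {x y : E} (hx : x ∈ s) (hy : y ∈ t) (h : x + y = a + b) : x = a ∧ y = b := by
  -- `a + b` is the midpoint of `x + b` and `a + y`
  have hmid : a + b ∈ openSegment 𝕜 (x + b) (a + y) :=
    ⟨1 / 2, 1 / 2, by norm_num, by norm_num, by norm_num,
      by linear_combination (norm := module) (1 / 2 : 𝕜) • h⟩
  obtain ⟨hxb, hay⟩ :=
    (mem_extremePoints.1 hab).2 _ (add_mem_add hx hb) _ (add_mem_add ha hy) hmid
  exact ⟨add_right_cancel hxb, add_left_cancel hay⟩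

end ExtremePointsAdd

theorem uniqueAdd_of_add_mem_extremePoints_add {𝕜 E M F : Type*} [Field 𝕜] [LinearOrder 𝕜]
    [IsStrictOrderedRing 𝕜] [AddCommGroup E] [Module 𝕜 E] [Add M] [FunLike F M E]
    [AddHomClass F M E] {φ : F} (hφ : Function.Injective φ) {A B : Finset M} {a b : M}
    (ha : a ∈ A) (hb : b ∈ B)
    (hab : φ a + φ b ∈ (convexHull 𝕜 (φ '' A) + convexHull 𝕜 (φ '' B)).extremePoints 𝕜) :
    UniqueAdd A B a b := by
  intro x y hx hy hxy
  have hsum : φ x + φ y = φ a + φ b := by rw [← map_add, hxy, map_add]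
  have := eq_and_eq_of_add_eq_of_add_mem_extremePoints_add hab
    (subset_convexHull 𝕜 _ (mem_image_of_mem φ ha)) (subset_convexHull 𝕜 _ (mem_image_of_mem φ hb))
    (subset_convexHull 𝕜 _ (mem_image_of_mem φ hx)) (subset_convexHull 𝕜 _ (mem_image_of_mem φ hy))
    hsum
  exact ⟨hφ this.1, hφ this.2⟩

theorem IsCompact.subset_of_extremePoints_subset {E : Type*} [AddCommGroup E] [Module ℝ E]
    [TopologicalSpace E] [T2Space E] [IsTopologicalAddGroup E] [ContinuousSMul ℝ E]
    [LocallyConvexSpace ℝ E] {s t : Set E} (hs : IsCompact s) (hsc : Convex ℝ s)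
    (ht : IsClosed t) (htc : Convex ℝ t) (h : s.extremePoints ℝ ⊆ t) : s ⊆ t := by
  rw [← closure_convexHull_extremePoints hs hsc]
  exact closure_minimal (convexHull_min h htc) ht

theorem AddMonoidAlgebra.add_mem_support_mul_of_uniqueAdd {R M : Type*} [Semiring R] [Add M]
    {f g : AddMonoidAlgebra R M} {a b : M} (h : UniqueAdd f.coeff.support g.coeff.support a b)
    (ha : f.coeff a ∈ nonZeroDivisorsLeft R) (hb : b ∈ g.coeff.support) :
    a + b ∈ (f * g).coeff.support := by
  rw [Finsupp.mem_support_iff, coeff_mul_add_of_uniqueAdd h]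
  exact fun h0 ↦
    Finsupp.mem_support_iff.1 hb ((mul_left_mem_nonZeroDivisorsLeft_eq_zero_iff ha).1 h0)

section NewtonPolytope

variable {R : Type*} [CommRing R] {r : ℕ}

noncomputable def latticeEmbedHom (r : ℕ) : (Fin r → ℤ) →+ (Fin r → ℝ) where
  toFun := latticeEmbed
  map_zero' := by ext; simp [latticeEmbed]
  map_add' _ _ := by ext; simp [latticeEmbed]

theorem latticeEmbed_injective : Function.Injective (latticeEmbed (r := r)) :=
  fun _ _ h ↦ funext fun i ↦ Int.cast_injective (congr_fun h i)

theorem isCompact_newtonPolytope (f : AddMonoidAlgebra R (Fin r → ℤ)) :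
    IsCompact (newtonPolytope f) :=
  (f.coeff.support.finite_toSet.image latticeEmbed).isCompact_convexHull ℝ

theorem convex_newtonPolytope (f : AddMonoidAlgebra R (Fin r → ℤ)) :
    Convex ℝ (newtonPolytope f) :=
  convex_convexHull ℝ _

theorem newtonPolytope_mul_subset (f g : AddMonoidAlgebra R (Fin r → ℤ)) :
    newtonPolytope (f * g) ⊆ newtonPolytope f + newtonPolytope g := by
  classical
  rw [newtonPolytope, newtonPolytope, newtonPolytope, ← convexHull_add]
  refine convexHull_mono ?_
  calc latticeEmbed '' ((f * g).coeff.support : Set (Fin r → ℤ))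
      ⊆ latticeEmbedHom r '' ↑(f.coeff.support + g.coeff.support) :=
        image_mono (AddMonoidAlgebra.support_coeff_mul_subset f g)
    _ = _ := by rw [Finset.coe_add, image_add]; rfl

theorem extremePoints_newtonPolytope_add_subset {f : AddMonoidAlgebra R (Fin r → ℤ)}
    (g : AddMonoidAlgebra R (Fin r → ℤ))
    (hf : ∀ l ∈ f.coeff.support, latticeEmbed l ∈ (newtonPolytope f).extremePoints ℝ →
      f.coeff l ∈ nonZeroDivisors R) :
    (newtonPolytope f + newtonPolytope g).extremePoints ℝ ⊆
      latticeEmbed '' ((f * g).coeff.support : Set (Fin r → ℤ)) := by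
  intro p hp
  obtain ⟨_, ⟨l, hl, rfl⟩, _, ⟨m, hm, rfl⟩, rfl⟩ :
      p ∈ latticeEmbed '' (f.coeff.support : Set _) +
        latticeEmbed '' (g.coeff.support : Set _) := by
    rw [newtonPolytope, newtonPolytope, ← convexHull_add] at hp
    exact extremePoints_convexHull_subset hp
  have hvertex := mem_extremePoints_of_add_mem_extremePoints_add hp
    (subset_convexHull ℝ _ (mem_image_of_mem _ hl)) (subset_convexHull ℝ _ (mem_image_of_mem _ hm))
  have huniq := uniqueAdd_of_add_mem_extremePoints_add (φ := latticeEmbedHom r)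
    latticeEmbed_injective hl hm hp
  exact ⟨l + m, AddMonoidAlgebra.add_mem_support_mul_of_uniqueAdd huniq (hf l hl hvertex).1 hm,
    map_add (latticeEmbedHom r) l m⟩

end NewtonPolytope

theorem newtonPolytope_mul_of_vertex_coeffs_nonZeroDivisors {R : Type*} [CommRing R] {r : ℕ}
    (f g : AddMonoidAlgebra R (Fin r → ℤ))
    (hf : ∀ l ∈ f.coeff.support, latticeEmbed l ∈ Set.extremePoints ℝ (newtonPolytope f) →
      f.coeff l ∈ nonZeroDivisors R) :
    newtonPolytope (f * g) = newtonPolytope f + newtonPolytope g := by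
  refine (newtonPolytope_mul_subset f g).antisymm ?_
  have hvertices : (newtonPolytope f + newtonPolytope g).extremePoints ℝ ⊆
      newtonPolytope (f * g) :=
    (extremePoints_newtonPolytope_add_subset g hf).trans (subset_convexHull ℝ _)
  have hcompact := (isCompact_newtonPolytope f).add (isCompact_newtonPolytope g)
  exact hcompact.subset_of_extremePoints_subset
    ((convex_newtonPolytope f).add (convex_newtonPolytope g))
    (isCompact_newtonPolytope _).isClosed (convex_newtonPolytope _) hvertices
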